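/- arXiv:1006.3266 — 4 statements merged into one kernel-verified Lean document; each statement's English description precedes it below -/
import Mathlib

section
/- If H is a subgroup of Sym_n and the monoid S_n(H) = ⟨a_1,...,a_n | a_1⋯a_n = a_{σ(1)}⋯a_{σ(n)}, σ ∈ H⟩ is cancellative, then the stabilizer of 1 in H and the stabilizer of n in H are both trivial. -/
/-- The word `a_{σ(1)} ⋯ a_{σ(n)}` in the free monoid on `n` generators. -/
def permWord {n : ℕ} (σ : Equiv.Perm (Fin n)) : FreeMonoid (Fin n) :=
  FreeMonoid.ofList (List.ofFn fun i => σ i)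

/-- The defining relations of `S_n(H)`. -/
def snRel (n : ℕ) (H : Set (Equiv.Perm (Fin n)))
    (a b : FreeMonoid (Fin n)) : Prop :=
  ∃ σ ∈ H, a = permWord 1 ∧ b = permWord σ

/-- The congruence generated by the relations of `S_n(H)`. -/
def snCon (n : ℕ) (H : Set (Equiv.Perm (Fin n))) : Con (FreeMonoid (Fin n)) :=
  conGen (snRel n H)

/-- The monoid `S_n(H)` presented by `a_1,…,a_n` with relations
`a_1⋯a_n = a_{σ(1)}⋯a_{σ(n)}` for `σ ∈ H`. -/
abbrev SnMonoid (n : ℕ) (H : Set (Equiv.Perm (Fin n))) : Type :=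
  (snCon n H).Quotient

/-- The canonical projection `π : FM_n → S_n(H)`. -/
def snPi (n : ℕ) (H : Set (Equiv.Perm (Fin n))) :
    FreeMonoid (Fin n) →* SnMonoid n H :=
  (snCon n H).mk'

/-- The generator `a_i` of `S_n(H)`. -/
def aGen (n : ℕ) (H : Set (Equiv.Perm (Fin n))) (i : Fin n) : SnMonoid n H :=
  snPi n H (FreeMonoid.of i)

/-- The element `z = a_1 a_2 ⋯ a_n` of `S_n(H)`. -/
def zElem (n : ℕ) (H : Set (Equiv.Perm (Fin n))) : SnMonoid n H :=
  snPi n H (permWord 1)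

/-- A (two-sided) ideal-like subset `I` of a monoid is prime if for all `u, v ∉ I`
there is `s` with `u * s * v ∉ I`. -/
def MonoidIdeal.IsPrime {M : Type*} [Monoid M] (I : Set M) : Prop :=
  ∀ u v : M, u ∉ I → v ∉ I → ∃ s : M, u * s * v ∉ I



/-- Length-preserving congruence that is trivial below length `n`. -/
def lenCon (n : ℕ) : Con (FreeMonoid (Fin n)) where
  r u v := u.toList.length = v.toList.length ∧ (u.toList.length < n → u = v)
  iseqv := by
    refine ⟨fun _ => ⟨rfl, fun _ => rfl⟩, ?_, ?_⟩
    · rintro u v ⟨h1, h2⟩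
      exact ⟨h1.symm, fun hl => (h2 (h1 ▸ hl)).symm⟩
    · rintro u v w ⟨h1, h2⟩ ⟨h3, h4⟩
      exact ⟨h1.trans h3, fun hl => (h2 hl).trans (h4 (h1 ▸ hl))⟩
  mul' := by
    rintro w x y z ⟨h1, h2⟩ ⟨h3, h4⟩
    constructor
    · simp [FreeMonoid.toList_mul, h1, h3]
    · intro hl
      simp only [FreeMonoid.toList_mul, List.length_append] at hl
      rw [h2 (by omega), h4 (by omega)]

lemma snCon_le_lenCon (n : ℕ) (H : Set (Equiv.Perm (Fin n))) :
    snCon n H ≤ lenCon n := by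
  refine Con.conGen_le.2 ?_
  rintro a b ⟨σ, hσ, rfl, rfl⟩
  constructor
  · simp [permWord, FreeMonoid.toList_ofList]
  · intro hl
    simp [permWord, FreeMonoid.toList_ofList] at hl

lemma permWord_head {m : ℕ} (τ : Equiv.Perm (Fin (m + 1))) :
    permWord τ = FreeMonoid.of (τ 0) *
      FreeMonoid.ofList (List.ofFn fun i : Fin m => τ i.succ) := by
  simp only [permWord, List.ofFn_succ]
  rfl

lemma permWord_last {m : ℕ} (τ : Equiv.Perm (Fin (m + 1))) :
    permWord τ = FreeMonoid.ofList (List.ofFn fun i : Fin m => τ i.castSucc) *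
      FreeMonoid.of (τ (Fin.last m)) := by
  simp only [permWord, List.ofFn_succ', List.concat_eq_append]
  rfl

theorem stmt0 (n : ℕ) (hn : 1 ≤ n) (H : Subgroup (Equiv.Perm (Fin n)))
    (hcanc : ∀ a b c : SnMonoid n ↑H, (a * b = a * c → b = c) ∧ (b * a = c * a → b = c)) :
    (∀ σ ∈ H, σ ⟨0, by omega⟩ = ⟨0, by omega⟩ → σ = 1) ∧
    (∀ σ ∈ H, σ ⟨n - 1, by omega⟩ = ⟨n - 1, by omega⟩ → σ = 1) := by
  obtain ⟨m, rfl⟩ : ∃ m, n = m + 1 := ⟨n - 1, by omega⟩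
  have key : ∀ σ ∈ H, snCon (m+1) ↑H (permWord 1) (permWord σ) :=
    fun σ hσ => ConGen.Rel.of _ _ ⟨σ, hσ, rfl, rfl⟩
  have keyQ : ∀ σ ∈ H, (snPi (m+1) ↑H) (permWord 1) = (snPi (m+1) ↑H) (permWord σ) :=
    fun σ hσ => Quotient.sound (key σ hσ)
  have len_lt : ∀ (f : Fin m → Fin (m+1)),
      (FreeMonoid.ofList (List.ofFn f)).toList.length < m + 1 := by
    intro f; simp [FreeMonoid.toList_ofList]
  constructor
  · intro σ hσ h0
    have hq := keyQ σ hσ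
    rw [permWord_head, permWord_head, map_mul, map_mul] at hq
    have h0' : σ 0 = 0 := h0
    rw [h0'] at hq
    have htail := (hcanc _ _ _).1 hq
    have hrel : snCon (m+1) ↑H (FreeMonoid.ofList (List.ofFn fun i : Fin m => (1 : Equiv.Perm (Fin (m+1))) i.succ)) (FreeMonoid.ofList (List.ofFn fun i : Fin m => σ i.succ)) :=
      Quotient.exact htail
    have heq := (snCon_le_lenCon (m+1) ↑H hrel).2 (len_lt _)
    have hfn : (fun i : Fin m => (1 : Equiv.Perm (Fin (m+1))) i.succ) =
        fun i : Fin m => σ i.succ := by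
      have := congrArg FreeMonoid.toList heq
      simpa [FreeMonoid.toList_ofList, List.ofFn_inj] using this
    ext j
    rcases Fin.eq_zero_or_eq_succ j with rfl | ⟨i, rfl⟩
    · simp [h0']
    · have := congrFun hfn i
      simp at this
      simp [← this]
  · intro σ hσ h0
    have hq := keyQ σ hσ
    rw [permWord_last, permWord_last, map_mul, map_mul] at hq
    have h0' : σ (Fin.last m) = Fin.last m := by
      simpa [Fin.last] using h0
    rw [h0'] at hq
    have htail := (hcanc _ _ _).2 hq
    have hrel : snCon (m+1) ↑H (FreeMonoid.ofList (List.ofFn fun i : Fin m => (1 : Equiv.Perm (Fin (m+1))) i.castSucc)) (FreeMonoid.ofList (List.ofFn fun i : Fin m => σ i.castSucc)) :=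
      Quotient.exact htail
    have heq := (snCon_le_lenCon (m+1) ↑H hrel).2 (len_lt _)
    have hfn : (fun i : Fin m => (1 : Equiv.Perm (Fin (m+1))) i.castSucc) =
        fun i : Fin m => σ i.castSucc := by
      have := congrArg FreeMonoid.toList heq
      simpa [FreeMonoid.toList_ofList, List.ofFn_inj] using this
    ext j
    rcases Fin.eq_castSucc_or_eq_last j with ⟨i, rfl⟩ | rfl
    · have := congrFun hfn i
      simp at this
      simp [← this]
    · simp [h0']
end

section
/- Let H be an abelian subgroup of Sym_n with n ≥ 3, S = S_n(H) and z = a_1⋯a_n. Then SzS is a prime ideal of the monoid S. -/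
namespace Stmt6Aux

/-- Words containing a factor `permWord σ` with `σ ∈ H`. -/
def Wset (n : ℕ) (H : Set (Equiv.Perm (Fin n))) : Set (FreeMonoid (Fin n)) :=
  {x | ∃ σ ∈ H, FreeMonoid.toList (permWord σ) <:+: FreeMonoid.toList x}

lemma Wset_mul_left {n : ℕ} {H : Set (Equiv.Perm (Fin n))} {x : FreeMonoid (Fin n)}
    (hx : x ∈ Wset n H) (y : FreeMonoid (Fin n)) : x * y ∈ Wset n H := by
  obtain ⟨σ, hσ, hinf⟩ := hx
  refine ⟨σ, hσ, ?_⟩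
  rw [FreeMonoid.toList_mul]
  exact hinf.trans ((FreeMonoid.toList x).prefix_append (FreeMonoid.toList y)).isInfix

lemma Wset_mul_right {n : ℕ} {H : Set (Equiv.Perm (Fin n))} {y : FreeMonoid (Fin n)}
    (hy : y ∈ Wset n H) (x : FreeMonoid (Fin n)) : x * y ∈ Wset n H := by
  obtain ⟨σ, hσ, hinf⟩ := hy
  refine ⟨σ, hσ, ?_⟩
  rw [FreeMonoid.toList_mul]
  exact hinf.trans (List.suffix_append (FreeMonoid.toList x) (FreeMonoid.toList y)).isInfix

/-- The coarse congruence: two words are related iff they are equal or both lie in `Wset`. -/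
def Wcon (n : ℕ) (H : Set (Equiv.Perm (Fin n))) : Con (FreeMonoid (Fin n)) where
  r x y := x = y ∨ (x ∈ Wset n H ∧ y ∈ Wset n H)
  iseqv := by
    refine ⟨fun _ => Or.inl rfl, ?_, ?_⟩
    · rintro x y (rfl | ⟨h1, h2⟩)
      · exact Or.inl rfl
      · exact Or.inr ⟨h2, h1⟩
    · rintro x y z (rfl | ⟨h1, h2⟩) (rfl | ⟨h3, h4⟩)
      · exact Or.inl rfl
      · exact Or.inr ⟨h3, h4⟩
      · exact Or.inr ⟨h1, h2⟩
      · exact Or.inr ⟨h1, h4⟩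
  mul' := by
    rintro a b c d (rfl | ⟨h1, h2⟩) (rfl | ⟨h3, h4⟩)
    · exact Or.inl rfl
    · exact Or.inr ⟨Wset_mul_right h3 a, Wset_mul_right h4 a⟩
    · exact Or.inr ⟨Wset_mul_left h1 c, Wset_mul_left h2 c⟩
    · exact Or.inr ⟨Wset_mul_left h1 c, Wset_mul_left h2 d⟩

lemma snCon_le_Wcon (n : ℕ) (H : Set (Equiv.Perm (Fin n)))
    (h1 : (1 : Equiv.Perm (Fin n)) ∈ H) : snCon n H ≤ Wcon n H := by
  apply Con.conGen_le.mpr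
  rintro x y ⟨σ, hσ, rfl, rfl⟩
  exact Or.inr ⟨⟨1, h1, List.infix_rfl⟩, ⟨σ, hσ, List.infix_rfl⟩⟩

lemma permWord_mem_Wset {n : ℕ} {H : Set (Equiv.Perm (Fin n))} {σ : Equiv.Perm (Fin n)}
    (hσ : σ ∈ H) {x : FreeMonoid (Fin n)}
    (h : FreeMonoid.toList (permWord σ) <:+: FreeMonoid.toList x) : x ∈ Wset n H :=
  ⟨σ, hσ, h⟩

lemma mem_ideal_iff {n : ℕ} {H : Set (Equiv.Perm (Fin n))}
    (h1 : (1 : Equiv.Perm (Fin n)) ∈ H) (x : FreeMonoid (Fin n)) :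
    (snPi n H x ∈ {y : SnMonoid n H | ∃ s t : SnMonoid n H, y = s * zElem n H * t}) ↔
      x ∈ Wset n H := by
  constructor
  · rintro ⟨s, t, heq⟩
    obtain ⟨ws, rfl⟩ := Con.mk'_surjective s
    obtain ⟨wt, rfl⟩ := Con.mk'_surjective t
    have heq' : snPi n H x = snPi n H (ws * permWord 1 * wt) := by
      rw [map_mul, map_mul]
      exact heq
    have hc : snCon n H x (ws * permWord 1 * wt) := Quotient.exact' heq'
    have := snCon_le_Wcon n H h1 hc
    rcases this with rfl | ⟨hw, _⟩
    · refine ⟨1, h1, ?_⟩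
      rw [FreeMonoid.toList_mul, FreeMonoid.toList_mul]
      exact ⟨FreeMonoid.toList ws, FreeMonoid.toList wt, by rw [List.append_assoc]⟩
    · exact hw
  · rintro ⟨σ, hσ, p, q, hpq⟩
    have hx : x = FreeMonoid.ofList p * permWord σ * FreeMonoid.ofList q := by
      have : FreeMonoid.ofList (p ++ FreeMonoid.toList (permWord σ) ++ q) =
          FreeMonoid.ofList (FreeMonoid.toList x) := by rw [hpq]
      rw [FreeMonoid.ofList_toList] at this
      rw [← this, FreeMonoid.ofList_append, FreeMonoid.ofList_append,
        FreeMonoid.ofList_toList]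
    refine ⟨snPi n H (FreeMonoid.ofList p), snPi n H (FreeMonoid.ofList q), ?_⟩
    have hz : snPi n H (permWord σ) = zElem n H := by
      symm
      exact Quotient.sound' (ConGen.Rel.of _ _ ⟨σ, hσ, rfl, rfl⟩)
    rw [hx, map_mul, map_mul, hz]

open List in
/-- The key combinatorial lemma: inserting `k k m m` between two words without
`n`-letter nodup factors creates no new ones (for `n ≥ 3`, `k` the last letter of the
first word, `m` the first letter of the second). -/
lemma core {n : ℕ} (hn : 3 ≤ n) (A B t : List (Fin n)) (z0 : Fin n)
    (ht : t.Nodup) (htl : t.length = n)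
    (hA : ¬ t <:+: A) (hB : ¬ t <:+: B) :
    ¬ t <:+: (A ++ [A.getD (A.length - 1) z0, A.getD (A.length - 1) z0,
        B.getD 0 z0, B.getD 0 z0] ++ B) := by
  set k := A.getD (A.length - 1) z0 with hk
  set m := B.getD 0 z0 with hm
  rintro ⟨p, q, he⟩
  set L := A.length with hL
  set i := p.length with hi
  have hlen : i + n + q.length = L + 4 + B.length := by
    have h := congrArg List.length he
    simp only [List.length_append, htl, List.length_cons, List.length_nil] at h
    omega
  rcases le_or_gt (i + n) L with h1 | h1
  · -- the factor lies entirely inside A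
    have he2 : (p ++ t ++ q.take (L - (i + n))) ++ q.drop (L - (i + n)) =
        A ++ ([k, k, m, m] ++ B) := by
      rw [List.append_assoc (p ++ t), List.take_append_drop, he, List.append_assoc]
    have hlq : (p ++ t ++ q.take (L - (i + n))).length = A.length := by
      simp only [List.length_append, htl, List.length_take]
      omega
    exact hA ⟨p, q.take (L - (i + n)), (List.append_inj he2 hlq).1⟩
  rcases le_or_gt (L + 4) i with h4 | h4
  · -- the factor lies entirely inside B
    have he2 : p.take (L + 4) ++ (p.drop (L + 4) ++ t ++ q) =
        (A ++ [k, k, m, m]) ++ B := by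
      calc p.take (L + 4) ++ (p.drop (L + 4) ++ t ++ q)
          = (p.take (L + 4) ++ p.drop (L + 4)) ++ t ++ q := by
            simp only [List.append_assoc]
        _ = p ++ t ++ q := by rw [List.take_append_drop]
        _ = _ := he
    have hlp : (p.take (L + 4)).length = (A ++ [k, k, m, m]).length := by
      simp only [List.length_take, List.length_append, List.length_cons, List.length_nil]
      omega
    exact hB ⟨p.drop (L + 4), q, (List.append_inj he2 hlp).2⟩
  -- the factor overlaps the inserted block
  have hval : ∀ j, j < n →
      t.getD j z0 = (A ++ [k, k, m, m] ++ B).getD (i + j) z0 := by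
    intro j hj
    have h1' : i + j < (p ++ t).length := by
      simp only [List.length_append, htl]; omega
    calc t.getD j z0 = (p ++ t).getD (i + j) z0 := by
          rw [List.getD_append_right p t z0 (i + j) (by omega)]
          congr 1
          omega
      _ = ((p ++ t) ++ q).getD (i + j) z0 := (List.getD_append _ _ _ _ h1').symm
      _ = _ := by rw [he]
  have hsval : ∀ c, c < 4 →
      (A ++ [k, k, m, m] ++ B).getD (L + c) z0 = [k, k, m, m].getD c z0 := by
    intro c hc
    rw [List.getD_append (A ++ [k, k, m, m]) B z0 (L + c)
      (by simp only [List.length_append, List.length_cons, List.length_nil]; omega)]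
    rw [List.getD_append_right A [k, k, m, m] z0 (L + c) (by omega)]
    congr 1
    omega
  have hinj : ∀ j1 j2, j1 < n → j2 < n → t.getD j1 z0 = t.getD j2 z0 → j1 = j2 := by
    intro j1 j2 hj1 hj2 hEq
    rw [List.getD_eq_getElem t z0 (n := j1) (by omega), List.getD_eq_getElem t z0 (n := j2) (by omega)] at hEq
    exact ht.getElem_inj_iff.mp hEq
  rcases Nat.lt_or_ge i (L + 1) with hiL | hiL
  · rcases Nat.lt_or_ge (L + 1) (i + n) with h2 | h2
    · -- positions L and L+1 (letters k, k) are both inside the factor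
      have e1 : t.getD (L - i) z0 = k := by
        rw [hval _ (by omega), show i + (L - i) = L + 0 by omega]
        exact (hsval 0 (by omega)).trans rfl
      have e2 : t.getD (L + 1 - i) z0 = k := by
        rw [hval _ (by omega), show i + (L + 1 - i) = L + 1 by omega]
        exact (hsval 1 (by omega)).trans rfl
      have := hinj _ _ (by omega) (by omega) (e1.trans e2.symm)
      omega
    · -- the factor ends exactly at position L (letter k); it also contains A's last letter
      have hiL2 : i + n = L + 1 := by omega
      have e1 : t.getD (n - 1) z0 = k := by
        rw [hval _ (by omega), show i + (n - 1) = L + 0 by omega]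
        exact (hsval 0 (by omega)).trans rfl
      have e2 : t.getD (n - 2) z0 = k := by
        rw [hval _ (by omega)]
        have hAv : (A ++ [k, k, m, m] ++ B).getD (i + (n - 2)) z0 = A.getD (L - 1) z0 := by
          rw [List.getD_append (A ++ [k, k, m, m]) B z0 (i + (n - 2))
            (by simp only [List.length_append, List.length_cons, List.length_nil]; omega)]
          rw [List.getD_append A [k, k, m, m] z0 (i + (n - 2)) (by omega)]
          congr 1
          omega
        rw [hAv]
      have := hinj _ _ (by omega) (by omega) (e1.trans e2.symm)
      omega
  · rcases Nat.lt_or_ge i (L + 3) with hi3 | hi3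
    · -- positions L+2 and L+3 (letters m, m) are both inside the factor
      have e1 : t.getD (L + 2 - i) z0 = m := by
        rw [hval _ (by omega), show i + (L + 2 - i) = L + 2 by omega]
        exact (hsval 2 (by omega)).trans rfl
      have e2 : t.getD (L + 3 - i) z0 = m := by
        rw [hval _ (by omega), show i + (L + 3 - i) = L + 3 by omega]
        exact (hsval 3 (by omega)).trans rfl
      have := hinj _ _ (by omega) (by omega) (e1.trans e2.symm)
      omega
    · -- the factor starts exactly at position L+3 (letter m); it also contains B's head
      have hi4 : i = L + 3 := by omega
      have e1 : t.getD 0 z0 = m := by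
        rw [hval _ (by omega), show i + 0 = L + 3 by omega]
        exact (hsval 3 (by omega)).trans rfl
      have e2 : t.getD 1 z0 = m := by
        rw [hval _ (by omega), show i + 1 = L + 4 by omega]
        rw [List.getD_append_right (A ++ [k, k, m, m]) B z0 (L + 4)
          (by simp only [List.length_append, List.length_cons, List.length_nil]; omega)]
        rw [show L + 4 - (A ++ [k, k, m, m]).length = 0 by
          simp only [List.length_append, List.length_cons, List.length_nil]; omega]
      have := hinj 0 1 (by omega) (by omega) (e1.trans e2.symm)
      omega

end Stmt6Aux

theorem stmt6 (n : ℕ) (hn : 3 ≤ n) (H : Subgroup (Equiv.Perm (Fin n)))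
    (hab : ∀ σ ∈ H, ∀ τ ∈ H, σ * τ = τ * σ) :
    MonoidIdeal.IsPrime
      {x : SnMonoid n ↑H | ∃ s t : SnMonoid n ↑H, x = s * zElem n ↑H * t} := by
  intro u v hu hv
  obtain ⟨w, rfl⟩ := Con.mk'_surjective (c := snCon n ↑H) u
  obtain ⟨w', rfl⟩ := Con.mk'_surjective (c := snCon n ↑H) v
  have h1 : (1 : Equiv.Perm (Fin n)) ∈ (↑H : Set (Equiv.Perm (Fin n))) := H.one_mem
  have hw : w ∉ Stmt6Aux.Wset n ↑H := fun h => hu ((Stmt6Aux.mem_ideal_iff h1 w).mpr h)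
  have hw' : w' ∉ Stmt6Aux.Wset n ↑H := fun h => hv ((Stmt6Aux.mem_ideal_iff h1 w').mpr h)
  set z0 : Fin n := ⟨0, by omega⟩ with hz0
  set A : List (Fin n) := FreeMonoid.toList w with hA
  set B : List (Fin n) := FreeMonoid.toList w' with hB
  set k : Fin n := A.getD (A.length - 1) z0 with hk
  set m : Fin n := B.getD 0 z0 with hm
  refine ⟨snPi n ↑H (FreeMonoid.ofList [k, k, m, m]), ?_⟩
  have hmul : (snCon n ↑H).mk' w * snPi n ↑H (FreeMonoid.ofList [k, k, m, m]) *
      (snCon n ↑H).mk' w' = snPi n ↑H (w * FreeMonoid.ofList [k, k, m, m] * w') := by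
    rw [map_mul, map_mul]
    rfl
  rw [hmul, Stmt6Aux.mem_ideal_iff h1]
  rintro ⟨σ, hσ, hinf⟩
  have hnodup : (FreeMonoid.toList (permWord σ)).Nodup := by
    have : FreeMonoid.toList (permWord σ) = List.ofFn (fun i => σ i) := rfl
    rw [this]
    exact List.nodup_ofFn.mpr σ.injective
  have hlen : (FreeMonoid.toList (permWord σ)).length = n := by
    have : FreeMonoid.toList (permWord σ) = List.ofFn (fun i => σ i) := rfl
    rw [this, List.length_ofFn]
  have hAinf : ¬ FreeMonoid.toList (permWord σ) <:+: A := fun h => hw ⟨σ, hσ, h⟩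
  have hBinf : ¬ FreeMonoid.toList (permWord σ) <:+: B := fun h => hw' ⟨σ, hσ, h⟩
  have hbig : FreeMonoid.toList (w * FreeMonoid.ofList [k, k, m, m] * w') =
      A ++ [k, k, m, m] ++ B := by
    rw [FreeMonoid.toList_mul, FreeMonoid.toList_mul]
    rfl
  rw [hbig] at hinf
  exact Stmt6Aux.core hn A B (FreeMonoid.toList (permWord σ)) z0 hnodup hlen hAinf hBinf hinf
end

section
/- Let H be an abelian subgroup of Sym_n with (1,2,...,n) ∉ H, n ≥ 3, suppose the stabilizer of 1 in H is trivial, and let π : FM_n → S_n(H) be the canonical projection. If v ∈ FM_n and 1 ≤ i,j ≤ n are such that π(x_i x_j v) ∈ z S, where z = a_1⋯a_n, then there exists σ ∈ H with i = σ(1) and j = σ(2). -/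
set_option linter.unnecessarySeqFocus false

namespace Stmt10Aux

variable {n : ℕ}

def W (σ : Equiv.Perm (Fin n)) : List (Fin n) := List.ofFn (fun i => σ i)

@[simp] lemma length_W (σ : Equiv.Perm (Fin n)) : (W σ).length = n := by
  simp [W]

lemma getElem_W (σ : Equiv.Perm (Fin n)) (t : ℕ) (h : t < (W σ).length) :
    (W σ)[t] = σ ⟨t, by simpa using h⟩ := by
  simp [W]

variable (H : Subgroup (Equiv.Perm (Fin n)))

def Eshift (e : ℕ) : Prop :=
  e < n ∧ ∃ δ ∈ H, ∀ (t : ℕ) (h : t + e < n), δ ⟨t, by omega⟩ = ⟨t + e, h⟩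

inductive Good : List (Fin n) → Prop
  | rel (σ : Equiv.Perm (Fin n)) (hσ : σ ∈ H) (q : List (Fin n)) : Good (W σ ++ q)
  | block (e : ℕ) (τ : Equiv.Perm (Fin n)) (he : Eshift H e) (h0 : 0 < e) (hτ : τ ∈ H)
      (u : List (Fin n)) (hu : Good u) : Good ((W τ).take e ++ u)

variable {H}
variable (hab : ∀ σ ∈ H, ∀ τ ∈ H, σ * τ = τ * σ)

include hab in
lemma boot {e m : ℕ} (he : Eshift H e) (h0 : 0 < e) (hme : m + e < n)
    {γ : Equiv.Perm (Fin n)} (hγ : γ ∈ H)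
    (hbase : ∀ (t : ℕ) (ht : t < e) (h : t + m < n), γ ⟨t, by omega⟩ = ⟨t + m, h⟩) :
    ∀ (t : ℕ) (h : t + m < n), γ ⟨t, by omega⟩ = ⟨t + m, h⟩ := by
  obtain ⟨hen, δ, hδ, hδs⟩ := he
  intro t
  induction t using Nat.strong_induction_on with
  | _ t IH =>
    intro h
    by_cases ht : t < e
    · exact hbase t ht h
    · push_neg at ht
      have h1 : (t - e) + e < n := by omega
      have hδval : δ ⟨t - e, by omega⟩ = ⟨t, by omega⟩ := by
        have := hδs (t - e) h1
        convert this using 2 <;> omega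
      have hcomm : γ * δ = δ * γ := hab γ hγ δ hδ
      have : γ ⟨t, by omega⟩ = δ (γ ⟨t - e, by omega⟩) := by
        rw [← hδval]
        have := congrArg (fun f => f ⟨t - e, by omega⟩) hcomm
        simpa using this
      rw [this, IH (t - e) (by omega) (by omega)]
      have := hδs (t - e + m) (by omega)
      convert this using 2 <;> omega

include hab in
lemma lamA {w : List (Fin n)} (hw : Good H w) {ρ : Equiv.Perm (Fin n)} (hρ : ρ ∈ H)
    {s : ℕ} (h1 : 0 < s) (h2 : s < n) (hlen : n - s ≤ w.length)
    (hocc : ∀ (t : ℕ) (h : t + s < n), w[t]'(by omega) = ρ ⟨t + s, h⟩) :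
    Eshift H s := by
  cases hw with
  | rel σ hσ q =>
    refine ⟨h2, ρ⁻¹ * σ, mul_mem (inv_mem hρ) hσ, ?_⟩
    intro t h
    have ht : t < (W σ).length := by simp; omega
    have hw : (W σ ++ q)[t]'(by simp; omega) = σ ⟨t, by omega⟩ := by
      rw [List.getElem_append_left ht, getElem_W]
    have heq := hocc t h
    rw [hw] at heq
    rw [Equiv.Perm.mul_apply, heq, Equiv.Perm.inv_def, Equiv.symm_apply_apply]
  | block e τ he h0 hτ u hu =>
    have hen : e < n := he.1
    have hBlen : ((W τ).take e).length = e := by simp; omega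
    have hbase : ∀ (t : ℕ) (ht : t < e) (h : t + s < n),
        (ρ⁻¹ * τ) ⟨t, by omega⟩ = ⟨t + s, h⟩ := by
      intro t ht h
      have ht' : t < ((W τ).take e).length := by omega
      have hw : ((W τ).take e ++ u)[t]'(by simp; omega) = τ ⟨t, by omega⟩ := by
        rw [List.getElem_append_left ht', List.getElem_take, getElem_W]
      have heq := hocc t h
      rw [hw] at heq
      rw [Equiv.Perm.mul_apply, heq, Equiv.Perm.inv_def, Equiv.symm_apply_apply]
    by_cases hc : n - s ≤ e
    · exact ⟨h2, ρ⁻¹ * τ, mul_mem (inv_mem hρ) hτ, fun t h => hbase t (by omega) h⟩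
    · push_neg at hc
      exact ⟨h2, ρ⁻¹ * τ, mul_mem (inv_mem hρ) hτ,
        boot hab he h0 (by omega) (mul_mem (inv_mem hρ) hτ) hbase⟩

include hab in
lemma main {u : List (Fin n)} (hu : Good H u) :
    ∀ (m : ℕ) {ρ ρ' : Equiv.Perm (Fin n)}, ρ ∈ H → ρ' ∈ H →
    ∀ (hlen : m + n ≤ u.length),
    (∀ (t : ℕ) (ht : t < n), u[m + t]'(by omega) = ρ ⟨t, ht⟩) →
    Good H (u.take m ++ W ρ' ++ u.drop (m + n)) := by
  induction hu with
  | rel σ hσ q =>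
    intro m ρ ρ' hρ hρ' hlen hocc
    rcases Nat.eq_zero_or_pos m with rfl | hm
    · simpa using Good.rel ρ' hρ' ((W σ ++ q).drop n)
    by_cases hmn : m < n
    · -- overlap with the relator block
      have hE : Eshift H m := by
        refine ⟨hmn, σ⁻¹ * ρ, mul_mem (inv_mem hσ) hρ, ?_⟩
        intro t h
        have h1 : m + t < (W σ).length := by simp; omega
        have heq := hocc t (by omega)
        rw [List.getElem_append_left h1, getElem_W] at heq
        rw [Equiv.Perm.mul_apply, ← heq, Equiv.Perm.inv_def, Equiv.symm_apply_apply]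
        apply Fin.ext; simp; omega
      have htake : (W σ ++ q).take m = (W σ).take m :=
        List.take_append_of_le_length (by simp; omega)
      have hdrop : (W σ ++ q).drop (m + n) = q.drop m := by
        rw [show m + n = (W σ).length + m by simp; omega, List.drop_length_add_append]
      rw [htake, hdrop, List.append_assoc]
      exact Good.block m σ hE hm hσ _ (Good.rel ρ' hρ' _)
    · -- occurrence inside the tail q
      push_neg at hmn
      have htake : (W σ ++ q).take m = W σ ++ q.take (m - n) := by
        conv_lhs => rw [show m = (W σ).length + (m - n) by simp; omega, List.take_length_add_append]
      have hdrop : (W σ ++ q).drop (m + n) = q.drop (m - n + n) := by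
        conv_lhs => rw [show m + n = (W σ).length + (m - n + n) by simp; omega, List.drop_length_add_append]
      rw [htake, hdrop, List.append_assoc, List.append_assoc]
      exact Good.rel σ hσ _
  | block e τ he h0 hτ u hu IH =>
    intro m ρ ρ' hρ hρ' hlen hocc
    rcases Nat.eq_zero_or_pos m with rfl | hm
    · simpa using Good.rel ρ' hρ' (((W τ).take e ++ u).drop n)
    have hen : e < n := he.1
    have hBlen : ((W τ).take e).length = e := by simp; omega
    by_cases hme : e ≤ m
    · -- occurrence inside u
      have hlen' : (m - e) + n ≤ u.length := by
        have := hlen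
        simp only [List.length_append, hBlen] at this
        omega
      have hocc' : ∀ (t : ℕ) (ht : t < n), u[(m - e) + t]'(by omega) = ρ ⟨t, ht⟩ := by
        intro t ht
        have heq := hocc t ht
        rw [List.getElem_append_right (by omega)] at heq
        rw [← heq]
        congr 1
        omega
      have hG := IH (m - e) hρ hρ' hlen' hocc'
      have htake : ((W τ).take e ++ u).take m = (W τ).take e ++ u.take (m - e) := by
        conv_lhs => rw [show m = ((W τ).take e).length + (m - e) by rw [hBlen]; omega,
          List.take_length_add_append]
      have hdrop : ((W τ).take e ++ u).drop (m + n) = u.drop ((m - e) + n) := by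
        conv_lhs => rw [show m + n = ((W τ).take e).length + ((m - e) + n) by rw [hBlen]; omega,
          List.drop_length_add_append]
      rw [htake, hdrop, List.append_assoc, List.append_assoc]
      exact Good.block e τ he h0 hτ _ (by rw [← List.append_assoc]; exact hG)
    · -- occurrence overlapping the block: 0 < m < e
      push_neg at hme
      set s := e - m with hs
      have hs1 : 0 < s := by omega
      have hsn : s < n := by omega
      have hulen : n - s ≤ u.length := by
        have := hlen
        simp only [List.length_append, hBlen] at this
        omega
      have hoccA : ∀ (t : ℕ) (h : t + s < n), u[t]'(by omega) = ρ ⟨t + s, h⟩ := by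
        intro t h
        have heq := hocc (t + s) h
        rw [List.getElem_append_right (by omega)] at heq
        rw [← heq]
        congr 1
        omega
      have hsE : Eshift H s := lamA hab hu hρ hs1 hsn hulen hoccA
      have hbase : ∀ (t : ℕ) (ht : t < s) (h : t + m < n),
          (τ⁻¹ * ρ) ⟨t, by omega⟩ = ⟨t + m, h⟩ := by
        intro t ht h
        have h1 : m + t < ((W τ).take e).length := by omega
        have heq := hocc t (by omega)
        rw [List.getElem_append_left h1, List.getElem_take, getElem_W] at heq
        rw [Equiv.Perm.mul_apply, ← heq, Equiv.Perm.inv_def, Equiv.symm_apply_apply]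
        apply Fin.ext; simp; omega
      have hmE : Eshift H m :=
        ⟨by omega, τ⁻¹ * ρ, mul_mem (inv_mem hτ) hρ,
          boot hab hsE hs1 (by omega) (mul_mem (inv_mem hτ) hρ) hbase⟩
      have htake : ((W τ).take e ++ u).take m = (W τ).take m := by
        rw [List.take_append_of_le_length (by omega), List.take_take]
        congr 1
        omega
      have hdrop : ((W τ).take e ++ u).drop (m + n) = u.drop (n - s) := by
        conv_lhs => rw [show m + n = ((W τ).take e).length + (n - s) by rw [hBlen]; omega,
          List.drop_length_add_append]
      rw [htake, hdrop, List.append_assoc]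
      exact Good.block m τ hmE hm hτ _ (Good.rel ρ' hρ' _)

include hab in
lemma rwCtx {p q : List (Fin n)} {ρ ρ' : Equiv.Perm (Fin n)} (hρ : ρ ∈ H) (hρ' : ρ' ∈ H)
    (h : Good H (p ++ W ρ ++ q)) : Good H (p ++ W ρ' ++ q) := by
  have hlen : p.length + n ≤ (p ++ W ρ ++ q).length := by simp
  have hocc : ∀ (t : ℕ) (ht : t < n),
      (p ++ W ρ ++ q)[p.length + t]'(by simp; omega) = ρ ⟨t, ht⟩ := by
    intro t ht
    rw [List.getElem_append_left (h' := by simp; omega) (by simp; omega : p.length + t < (p ++ W ρ).length),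
      List.getElem_append_right (by omega), getElem_W]
    congr 1
    apply Fin.ext
    simp
  have hG := main hab h p.length hρ hρ' hlen hocc
  have htake : (p ++ W ρ ++ q).take p.length = p := by
    rw [List.append_assoc, List.take_left]
  have hdrop : (p ++ W ρ ++ q).drop (p.length + n) = q := by
    rw [show p.length + n = (p ++ W ρ).length by simp, List.drop_left]
  rwa [htake, hdrop] at hG

lemma one_not_E (hrot : finRotate n ∉ H) (hn : 3 ≤ n) : ¬ Eshift H 1 := by
  rintro ⟨h1n, δ, hδ, hδs⟩
  apply hrot
  have hδeq : δ = finRotate n := by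
    obtain ⟨k, rfl⟩ : ∃ k, n = k + 1 := ⟨n - 1, by omega⟩
    ext i
    rcases Nat.lt_or_ge ((i : ℕ) + 1) (k + 1) with hi | hi
    · have heq := hδs i hi
      rw [show (⟨(i : ℕ), by omega⟩ : Fin (k + 1)) = i by simp] at heq
      rw [heq, finRotate_succ_apply]
      rw [Fin.val_add_one_of_lt (by rw [Fin.lt_iff_val_lt_val]; simp [Fin.last]; omega)]
    · have hik : (i : ℕ) = k := by have := i.isLt; omega
      have hlast : i = Fin.last k := by simp [Fin.ext_iff, Fin.last, hik]
      rw [hlast, finRotate_succ_apply, Fin.last_add_one]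
      by_contra hne
      have hv : (δ (Fin.last k) : ℕ) ≠ 0 := by
        exact fun h0 => hne (h0.trans (Fin.val_zero _).symm)
      set y := δ (Fin.last k) with hy
      have hy1 : (y : ℕ) - 1 + 1 < k + 1 := by
        have := y.isLt; omega
      have heq0 := hδs ((y : ℕ) - 1) hy1
      have heq : δ ⟨(y : ℕ) - 1, by omega⟩ = y := by
        rw [heq0]; apply Fin.ext; simp; omega
      have hinj := δ.injective (heq.trans hy)
      simp [Fin.ext_iff, Fin.last] at hinj
      have := y.isLt
      omega
  rwa [← hδeq]

lemma extract (hrot : finRotate n ∉ H) (hn : 3 ≤ n) {i j : Fin n} {v : List (Fin n)}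
    (h : Good H (i :: j :: v)) :
    ∃ σ ∈ H, i = σ ⟨0, lt_of_lt_of_le (by norm_num) hn⟩ ∧ j = σ ⟨1, lt_of_lt_of_le (by norm_num) hn⟩ := by
  generalize hw : i :: j :: v = w at h
  cases h with
  | rel σ hσ q =>
    refine ⟨σ, hσ, ?_, ?_⟩
    · have hh := List.getElem_of_eq hw (by simp : (0 : ℕ) < (i :: j :: v).length)
      rw [List.getElem_cons_zero] at hh
      rw [hh, List.getElem_append_left (by simp; omega), getElem_W]
    · have hh := List.getElem_of_eq hw (by simp : (1 : ℕ) < (i :: j :: v).length)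
      rw [List.getElem_cons_succ, List.getElem_cons_zero] at hh
      rw [hh, List.getElem_append_left (by simp; omega), getElem_W]
  | block e τ he h0 hτ u hu =>
    have he1 : e ≠ 1 := fun h1 => one_not_E hrot hn (h1 ▸ he)
    have he2 : 2 ≤ e := by omega
    have hen : e < n := he.1
    have hBlen : ((W τ).take e).length = e := by simp; omega
    refine ⟨τ, hτ, ?_, ?_⟩
    · have hh := List.getElem_of_eq hw (by simp : (0 : ℕ) < (i :: j :: v).length)
      rw [List.getElem_cons_zero] at hh
      rw [hh, List.getElem_append_left (by omega), List.getElem_take, getElem_W]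
    · have hh := List.getElem_of_eq hw (by simp : (1 : ℕ) < (i :: j :: v).length)
      rw [List.getElem_cons_succ, List.getElem_cons_zero] at hh
      rw [hh, List.getElem_append_left (by omega), List.getElem_take, getElem_W]

end Stmt10Aux

theorem stmt10 (n : ℕ) (hn : 3 ≤ n) (H : Subgroup (Equiv.Perm (Fin n)))
    (hab : ∀ σ ∈ H, ∀ τ ∈ H, σ * τ = τ * σ) (hrot : finRotate n ∉ H)
    (hstab : ∀ σ ∈ H, σ ⟨0, by omega⟩ = ⟨0, by omega⟩ → σ = 1)
    (v : FreeMonoid (Fin n)) (i j : Fin n)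
    (h : ∃ s : SnMonoid n ↑H,
      snPi n ↑H (FreeMonoid.of i * FreeMonoid.of j * v) = zElem n ↑H * s) :
    ∃ σ ∈ H, i = σ ⟨0, by omega⟩ ∧ j = σ ⟨1, by omega⟩ := by
  classical
  obtain ⟨s, hs⟩ := h
  obtain ⟨w, rfl⟩ := Con.mk'_surjective s
  have hcon : snCon n ↑H (FreeMonoid.of i * FreeMonoid.of j * v) (permWord 1 * w) := by
    have : snPi n ↑H (FreeMonoid.of i * FreeMonoid.of j * v)
        = snPi n ↑H (permWord 1 * w) := by
      rw [hs, map_mul]; rfl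
    exact (Con.eq _).mp this
  have key : ∀ (p q : FreeMonoid (Fin n)) (σ : Equiv.Perm (Fin n)),
      (p * permWord σ * q).toList
        = p.toList ++ Stmt10Aux.W σ ++ q.toList := by
    intro p q σ
    simp only [FreeMonoid.toList_mul]
    rfl
  let C : Con (FreeMonoid (Fin n)) :=
    ⟨⟨fun a b => ∀ p q : FreeMonoid (Fin n),
        Stmt10Aux.Good H ((p * a * q).toList) ↔ Stmt10Aux.Good H ((p * b * q).toList),
      ⟨fun _ _ _ => Iff.rfl, fun h p q => (h p q).symm,
        fun h1 h2 p q => (h1 p q).trans (h2 p q)⟩⟩,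
      ?_⟩
  case refine_1 =>
    intro a b c d h1 h2 p q
    have e1 : p * (a * c) * q = p * a * (c * q) := by
      simp [mul_assoc]
    have e2 : p * (b * d) * q = (p * b) * d * q := by
      simp [mul_assoc]
    have e3 : p * b * (c * q) = (p * b) * c * q := by
      simp [mul_assoc]
    rw [e1, e2]
    exact (h1 p (c * q)).trans (by rw [e3]; exact h2 (p * b) q)
  have hle : snCon n ↑H ≤ C := by
    apply Con.conGen_le.mpr
    rintro a b ⟨σ, hσ, rfl, rfl⟩ p q
    rw [key, key]
    constructor
    · exact fun hg => Stmt10Aux.rwCtx hab (one_mem H) hσ hg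
    · exact fun hg => Stmt10Aux.rwCtx hab hσ (one_mem H) hg
  have hC := hle hcon
  have hiff := hC 1 1
  have e4 : (1 : FreeMonoid (Fin n)) * (FreeMonoid.of i * FreeMonoid.of j * v) * 1
      = FreeMonoid.of i * FreeMonoid.of j * v := by simp
  have e5 : (1 : FreeMonoid (Fin n)) * (permWord 1 * w) * 1 = permWord 1 * w := by simp
  rw [e4, e5] at hiff
  have hzw : Stmt10Aux.Good H ((permWord (1 : Equiv.Perm (Fin n)) * w).toList) := by
    have : (permWord (1 : Equiv.Perm (Fin n)) * w).toList
        = Stmt10Aux.W (1 : Equiv.Perm (Fin n)) ++ w.toList := by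
      simp only [FreeMonoid.toList_mul]; rfl
    rw [this]
    exact Stmt10Aux.Good.rel 1 (one_mem H) w.toList
  have hgood := hiff.mpr hzw
  have e6 : (FreeMonoid.of i * FreeMonoid.of j * v).toList = i :: j :: v.toList := by
    simp [FreeMonoid.toList_mul, FreeMonoid.toList_of]
  rw [e6] at hgood
  exact Stmt10Aux.extract hrot hn hgood
end

section
/- Let H be a subset of Sym_n, S = S_n(H), z = a_1⋯a_n, K a field, and Q a prime ideal of the monoid S with SzS ⊆ Q. Then the quotient algebra K[S]/K[Q] is a prime ring. -/
namespace Stmt15Aux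

variable {n : ℕ} {H : Set (Equiv.Perm (Fin n))}

lemma length_permWord (σ : Equiv.Perm (Fin n)) : (permWord σ).length = n := by
  show (List.ofFn fun i => σ i).length = n
  exact List.length_ofFn

lemma snConRel_length {w w' : FreeMonoid (Fin n)} (h : ConGen.Rel (snRel n H) w w') :
    w.length = w'.length := by
  induction h with
  | of a b hab =>
    obtain ⟨σ, _, ha, hb⟩ := hab
    rw [ha, hb, length_permWord, length_permWord]
  | refl => rfl
  | symm _ ih => omega
  | trans _ _ ih1 ih2 => omega
  | mul _ _ ih1 ih2 => rw [FreeMonoid.length_mul, FreeMonoid.length_mul]; omega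

/-- `w` contains a factor `permWord σ` with `σ ∈ H ∪ {1}`. -/
def HasFull (n : ℕ) (H : Set (Equiv.Perm (Fin n))) (w : FreeMonoid (Fin n)) : Prop :=
  ∃ x y : FreeMonoid (Fin n), ∃ σ, (σ = 1 ∨ σ ∈ H) ∧ w = x * permWord σ * y

lemma HasFull.mul_right {w : FreeMonoid (Fin n)} (h : HasFull n H w)
    (y : FreeMonoid (Fin n)) : HasFull n H (w * y) := by
  obtain ⟨x, y', σ, hσ, rfl⟩ := h
  exact ⟨x, y' * y, σ, hσ, by rw [mul_assoc]⟩

lemma HasFull.mul_left {w : FreeMonoid (Fin n)} (h : HasFull n H w)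
    (x : FreeMonoid (Fin n)) : HasFull n H (x * w) := by
  obtain ⟨x', y, σ, hσ, rfl⟩ := h
  exact ⟨x * x', y, σ, hσ, by rw [← mul_assoc, ← mul_assoc]⟩

lemma snCon_cases' {w w' : FreeMonoid (Fin n)} (h : ConGen.Rel (snRel n H) w w') :
    w = w' ∨ (HasFull n H w ∧ HasFull n H w') := by
  induction h with
  | of a b hab =>
    obtain ⟨σ, hσ, ha, hb⟩ := hab
    right
    exact ⟨⟨1, 1, 1, Or.inl rfl, by rw [ha, one_mul, mul_one]⟩,
           ⟨1, 1, σ, Or.inr hσ, by rw [hb, one_mul, mul_one]⟩⟩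
  | refl => exact Or.inl rfl
  | symm _ ih => rcases ih with rfl | ⟨h1, h2⟩; · exact Or.inl rfl
                 · exact Or.inr ⟨h2, h1⟩
  | trans _ _ ih1 ih2 =>
    rcases ih1 with rfl | ⟨h1, h2⟩
    · exact ih2
    · rcases ih2 with rfl | ⟨h3, h4⟩
      · exact Or.inr ⟨h1, h2⟩
      · exact Or.inr ⟨h1, h4⟩
  | mul _ _ ih1 ih2 =>
    rcases ih1 with rfl | ⟨h1, h2⟩
    · rcases ih2 with rfl | ⟨h3, h4⟩
      · exact Or.inl rfl
      · exact Or.inr ⟨h3.mul_left _, h4.mul_left _⟩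
    · exact Or.inr ⟨h1.mul_right _, h2.mul_right _⟩

lemma snCon_length {w w' : FreeMonoid (Fin n)} (h : snCon n H w w') :
    w.length = w'.length := snConRel_length h

lemma snCon_cases {w w' : FreeMonoid (Fin n)} (h : snCon n H w w') :
    w = w' ∨ (HasFull n H w ∧ HasFull n H w') := snCon_cases' h

lemma pi_mem_of_hasFull (Q : Set (SnMonoid n H))
    (hz : ∀ s t : SnMonoid n H, s * zElem n H * t ∈ Q)
    {w : FreeMonoid (Fin n)} (h : HasFull n H w) : snPi n H w ∈ Q := by
  obtain ⟨x, y, σ, hσ, rfl⟩ := h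
  have hmid : snPi n H (permWord σ) = zElem n H := by
    rcases hσ with rfl | hσ
    · rfl
    · have : snCon n H (permWord 1) (permWord σ) :=
        ConGen.Rel.of _ _ ⟨σ, hσ, rfl, rfl⟩
      exact ((snCon n H).eq.2 this).symm
  rw [map_mul, map_mul, hmid]
  exact hz _ _

lemma unique_word (Q : Set (SnMonoid n H))
    (hz : ∀ s t : SnMonoid n H, s * zElem n H * t ∈ Q)
    {w w' : FreeMonoid (Fin n)} (h : snPi n H w = snPi n H w')
    (hQ : snPi n H w ∉ Q) : w = w' := by
  have hc : snCon n H w w' := (snCon n H).eq.1 h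
  rcases snCon_cases hc with rfl | ⟨h1, _⟩
  · rfl
  · exact absurd (pi_mem_of_hasFull Q hz h1) hQ

/-- Word-length, descended to `S_n(H)`. -/
def wlen (n : ℕ) (H : Set (Equiv.Perm (Fin n))) : SnMonoid n H → ℕ :=
  Quotient.lift FreeMonoid.length fun _ _ h => snCon_length h

lemma wlen_pi (w : FreeMonoid (Fin n)) : wlen n H (snPi n H w) = w.length := rfl

lemma wlen_mul (x y : SnMonoid n H) :
    wlen n H (x * y) = wlen n H x + wlen n H y := by
  obtain ⟨wx, rfl⟩ := Con.mk'_surjective (c := snCon n H) x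
  obtain ⟨wy, rfl⟩ := Con.mk'_surjective (c := snCon n H) y
  rw [← map_mul]
  exact FreeMonoid.length_mul wx wy

lemma key_inj (Q : Set (SnMonoid n H))
    (hz : ∀ s t : SnMonoid n H, s * zElem n H * t ∈ Q)
    {u v u' v' s : SnMonoid n H}
    (hQ : u * s * v ∉ Q)
    (hu : wlen n H u' ≤ wlen n H u) (hv : wlen n H v' ≤ wlen n H v)
    (heq : u' * s * v' = u * s * v) : u' = u ∧ v' = v := by
  obtain ⟨wu, rfl⟩ := Con.mk'_surjective (c := snCon n H) u
  obtain ⟨wv, rfl⟩ := Con.mk'_surjective (c := snCon n H) v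
  obtain ⟨wu', rfl⟩ := Con.mk'_surjective (c := snCon n H) u'
  obtain ⟨wv', rfl⟩ := Con.mk'_surjective (c := snCon n H) v'
  obtain ⟨ws, rfl⟩ := Con.mk'_surjective (c := snCon n H) s
  have heq' : snPi n H (wu * ws * wv) = snPi n H (wu' * ws * wv') := by
    rw [map_mul, map_mul, map_mul, map_mul]; exact heq.symm
  have hQ' : snPi n H (wu * ws * wv) ∉ Q := by
    rw [map_mul, map_mul]; exact hQ
  have hwords : wu * ws * wv = wu' * ws * wv' := unique_word Q hz heq' hQ'
  have hlists : wu.toList ++ (ws.toList ++ wv.toList)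
      = wu'.toList ++ (ws.toList ++ wv'.toList) := by
    have := congrArg FreeMonoid.toList hwords
    simpa [FreeMonoid.toList_mul, List.append_assoc] using this
  have hu' : wu'.toList.length ≤ wu.toList.length := hu
  have hv' : wv'.toList.length ≤ wv.toList.length := hv
  have htot := congrArg List.length hlists
  simp only [List.length_append] at htot
  have hlu : wu.toList.length = wu'.toList.length := by omega
  obtain ⟨h1, h2⟩ := List.append_inj hlists hlu
  have h3 : wv.toList = wv'.toList := by
    have := List.append_cancel_left h2
    exact this
  constructor
  · exact congrArg (snPi n H) (FreeMonoid.toList.injective h1.symm)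
  · exact congrArg (snPi n H) (FreeMonoid.toList.injective h3.symm)

lemma mem_span_iff {M : Type*} [Monoid M] (K : Type) [Field K] (Q : Set M)
    (x : MonoidAlgebra K M) :
    x ∈ Submodule.span K ((MonoidAlgebra.of K M) '' Q) ↔ ∀ a ∈ x.coeff.support, a ∈ Q := by
  classical
  constructor
  · intro hx
    induction hx using Submodule.span_induction with
    | mem y hy =>
      obtain ⟨q, hq, rfl⟩ := hy
      intro a ha
      rw [MonoidAlgebra.of_apply, MonoidAlgebra.coeff_single] at ha
      have := Finsupp.support_single_subset ha
      simp only [Finset.mem_singleton] at this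
      subst this; exact hq
    | zero => simp
    | add x y hx hy ihx ihy =>
      intro a ha
      rw [MonoidAlgebra.coeff_add] at ha
      rcases Finset.mem_union.1 (Finsupp.support_add ha) with h | h
      · exact ihx a h
      · exact ihy a h
    | smul c x hx ih =>
      intro a ha
      rw [MonoidAlgebra.coeff_smul] at ha
      exact ih a (Finsupp.support_smul ha)
  · have main : ∀ x : MonoidAlgebra K M, (∀ a ∈ x.coeff.support, a ∈ Q) →
        x ∈ Submodule.span K ((MonoidAlgebra.of K M) '' Q) := by
      intro x
      induction x using MonoidAlgebra.induction with
      | zero => intro _; exact Submodule.zero_mem _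
      | single_add a b f hf hb ih =>
        intro h
        have hfa : f.coeff a = 0 := Finsupp.notMem_support_iff.1 hf
        have haQ : a ∈ Q := by
          refine h a (Finsupp.mem_support_iff.2 ?_)
          simp [MonoidAlgebra.coeff_add, MonoidAlgebra.coeff_single, Finsupp.add_apply, Finsupp.single_eq_same, hfa, hb]
        have hfQ : ∀ c ∈ f.coeff.support, c ∈ Q := by
          intro c hc
          have hca : c ≠ a := fun e => hf (e ▸ hc)
          refine h c (Finsupp.mem_support_iff.2 ?_)
          rw [MonoidAlgebra.coeff_add, MonoidAlgebra.coeff_single, Finsupp.add_apply, Finsupp.single_eq_of_ne' (Ne.symm hca), zero_add]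
          exact Finsupp.mem_support_iff.1 hc
        refine Submodule.add_mem _ ?_ (ih hfQ)
        have hsb : MonoidAlgebra.single a b = b • (MonoidAlgebra.of K M a) := by
          rw [MonoidAlgebra.of_apply]
          rw [MonoidAlgebra.smul_single', mul_one]
        rw [hsb]
        exact Submodule.smul_mem _ _ (Submodule.subset_span ⟨a, haQ, rfl⟩)
    exact main x

lemma triple_expand {M : Type*} [Monoid M] (K : Type) [Field K]
    (f g : MonoidAlgebra K M) (s : M) :
    f * MonoidAlgebra.single s (1:K) * g =
      ∑ u' ∈ f.coeff.support, ∑ v' ∈ g.coeff.support,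
        MonoidAlgebra.single (u' * s * v') (f.coeff u' * g.coeff v') := by
  conv_lhs => rw [← MonoidAlgebra.sum_coeff_single f, ← MonoidAlgebra.sum_coeff_single g]
  rw [Finsupp.sum, Finsupp.sum, Finset.sum_mul, Finset.sum_mul]
  refine Finset.sum_congr rfl fun u' _ => ?_
  rw [MonoidAlgebra.single_mul_single, mul_one, Finset.mul_sum]
  refine Finset.sum_congr rfl fun v' _ => ?_
  rw [MonoidAlgebra.single_mul_single]

lemma triple_apply {M : Type*} [Monoid M] (K : Type) [Field K]
    (f g : MonoidAlgebra K M) (s : M) {u v : M}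
    (hu : u ∈ f.coeff.support) (hv : v ∈ g.coeff.support)
    (hinj : ∀ u' ∈ f.coeff.support, ∀ v' ∈ g.coeff.support,
      u' * s * v' = u * s * v → u' = u ∧ v' = v) :
    (f * MonoidAlgebra.single s (1:K) * g).coeff (u * s * v) = f.coeff u * g.coeff v := by
  classical
  rw [triple_expand]
  simp only [MonoidAlgebra.coeff_sum, MonoidAlgebra.coeff_single, Finsupp.finset_sum_apply]
  rw [Finset.sum_eq_single_of_mem u hu]
  · rw [Finset.sum_eq_single_of_mem v hv]
    · rw [Finsupp.single_apply, if_pos rfl]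
    · intro v' hv' hne
      rw [Finsupp.single_apply, if_neg]
      intro hcontra
      exact hne ((hinj u hu v' hv' hcontra).2)
  · intro u' hu' hne
    refine Finset.sum_eq_zero fun v' hv' => ?_
    rw [Finsupp.single_apply, if_neg]
    intro hcontra
    exact hne ((hinj u' hu' v' hv' hcontra).1)

end Stmt15Aux

theorem stmt15 (n : ℕ) (H : Set (Equiv.Perm (Fin n))) (K : Type) [Field K]
    (Q : Set (SnMonoid n H))
    (hideal : ∀ s t q : SnMonoid n H, q ∈ Q → s * q * t ∈ Q)
    (hprime : ∀ u v : SnMonoid n H, u ∉ Q → v ∉ Q →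
      ∃ s : SnMonoid n H, u * s * v ∉ Q)
    (hz : ∀ s t : SnMonoid n H, s * zElem n H * t ∈ Q) :
    ∀ a b : (ringConGen (fun x y : MonoidAlgebra K (SnMonoid n H) =>
        x - y ∈ Submodule.span K
          ((MonoidAlgebra.of K (SnMonoid n H)) '' Q))).Quotient,
      (∀ r, a * r * b = 0) → a = 0 ∨ b = 0 := by
  classical
  have MAdef : True := trivial
  set I : Submodule K (MonoidAlgebra K (SnMonoid n H)) :=
    Submodule.span K ((MonoidAlgebra.of K (SnMonoid n H)) '' Q) with hI
  set rel : MonoidAlgebra K (SnMonoid n H) → MonoidAlgebra K (SnMonoid n H) → Prop := fun x y => x - y ∈ I with hrelly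
  have hmem : ∀ x : MonoidAlgebra K (SnMonoid n H), x ∈ I ↔ ∀ a ∈ x.coeff.support, a ∈ Q :=
    fun x => Stmt15Aux.mem_span_iff K Q x
  -- support closure under multiplication
  have hmulr : ∀ x y : MonoidAlgebra K (SnMonoid n H), (∀ a ∈ x.coeff.support, a ∈ Q) →
      ∀ a ∈ (x * y).coeff.support, a ∈ Q := by
    intro x y hx a ha
    have h2 := MonoidAlgebra.support_coeff_mul_subset x y ha
    rw [Finset.mem_mul] at h2
    obtain ⟨a1, h1, a2, _, rfl⟩ := h2
    have := hideal 1 a2 a1 (hx a1 h1)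
    simpa using this
  have hmull : ∀ x y : MonoidAlgebra K (SnMonoid n H), (∀ a ∈ x.coeff.support, a ∈ Q) →
      ∀ a ∈ (y * x).coeff.support, a ∈ Q := by
    intro x y hx a ha
    have h2 := MonoidAlgebra.support_coeff_mul_subset y x ha
    rw [Finset.mem_mul] at h2
    obtain ⟨a1, _, a2, h1, rfl⟩ := h2
    have := hideal a1 1 a2 (hx a2 h1)
    simpa using this
  -- the ring congruence given by the ideal I
  let c : RingCon (MonoidAlgebra K (SnMonoid n H)) :=
  { r := rel
    iseqv := ⟨fun x => by simp [hrelly], fun {x y} h => by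
        simpa [hrelly, neg_sub] using Submodule.neg_mem _ h,
      fun {x y z} h1 h2 => by
        simpa [hrelly, sub_add_sub_cancel] using Submodule.add_mem _ h1 h2⟩
    mul' := fun {w x y z} h1 h2 => by
      show w * y - x * z ∈ I
      have key : w * y - x * z = (w - x) * y + x * (y - z) := by noncomm_ring
      rw [key]
      refine Submodule.add_mem _ ?_ ?_
      · exact (hmem _).2 (hmulr _ y ((hmem _).1 h1))
      · exact (hmem _).2 (hmull _ x ((hmem _).1 h2))
    add' := fun {w x y z} h1 h2 => by
      show w + y - (x + z) ∈ I
      have key : w + y - (x + z) = (w - x) + (y - z) := by abel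
      rw [key]
      exact Submodule.add_mem _ h1 h2 }
  have hle : ∀ {x y : MonoidAlgebra K (SnMonoid n H)}, RingConGen.Rel rel x y → c x y := by
    intro x y h
    induction h with
    | of x y h => exact h
    | refl x => exact c.refl x
    | symm _ ih => exact c.symm ih
    | trans _ _ ih1 ih2 => exact c.trans ih1 ih2
    | add _ _ ih1 ih2 => exact c.add ih1 ih2
    | mul _ _ ih1 ih2 => exact c.mul ih1 ih2
  have hzero : ∀ x : MonoidAlgebra K (SnMonoid n H), ((x : (ringConGen rel).Quotient) = 0) ↔ x ∈ I := by
    intro x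
    rw [show (0 : (ringConGen rel).Quotient) = ((0 : MonoidAlgebra K (SnMonoid n H)) : (ringConGen rel).Quotient)
        from rfl]
    rw [RingCon.eq]
    constructor
    · intro h
      have h' : RingConGen.Rel rel x 0 := h
      have h2 : c x 0 := hle h'
      have h3 : x - 0 ∈ I := h2
      simpa using h3
    · intro h
      exact RingConGen.Rel.of _ _ (by simpa [hrelly] using h)
  intro a b hab
  by_contra hcon
  push_neg at hcon
  obtain ⟨ha, hb⟩ := hcon
  obtain ⟨α, rfl⟩ := Quotient.mk''_surjective a
  obtain ⟨β, rfl⟩ := Quotient.mk''_surjective b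
  have hαI : α ∉ I := fun h => ha ((hzero α).2 h)
  have hβI : β ∉ I := fun h => hb ((hzero β).2 h)
  have hprod : ∀ γ : MonoidAlgebra K (SnMonoid n H), α * γ * β ∈ I := by
    intro γ
    refine (hzero _).1 ?_
    have h2 := hab ((γ : MonoidAlgebra K (SnMonoid n H)) : (ringConGen rel).Quotient)
    rw [RingCon.coe_mul, RingCon.coe_mul]
    exact h2
  -- restrict to the part outside Q
  set p : SnMonoid n H → Prop := fun x => x ∉ Q with hp
  let fil : MonoidAlgebra K (SnMonoid n H) → MonoidAlgebra K (SnMonoid n H) :=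
    fun y => MonoidAlgebra.ofCoeff (Finsupp.filter p y.coeff)
  let fil' : MonoidAlgebra K (SnMonoid n H) → MonoidAlgebra K (SnMonoid n H) :=
    fun y => MonoidAlgebra.ofCoeff (Finsupp.filter (fun a => ¬ p a) y.coeff)
  set α' : MonoidAlgebra K (SnMonoid n H) := fil α with hα'
  set β' : MonoidAlgebra K (SnMonoid n H) := fil β with hβ'
  have hα'Q : ∀ a ∈ α'.coeff.support, a ∉ Q := by
    intro a ha2
    rw [hα', Finsupp.support_filter, Finset.mem_filter] at ha2
    exact ha2.2
  have hβ'Q : ∀ a ∈ β'.coeff.support, a ∉ Q := by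
    intro a ha2
    rw [hβ', Finsupp.support_filter, Finset.mem_filter] at ha2
    exact ha2.2
  have hdiffmem : ∀ x : MonoidAlgebra K (SnMonoid n H), x - fil x ∈ I := by
    intro x
    have h3 : fil x + fil' x = x :=
      MonoidAlgebra.coeff_injective (Finsupp.filter_pos_add_filter_neg x.coeff p)
    have h2 : x - fil x = fil' x := sub_eq_iff_eq_add'.2 h3.symm
    rw [h2]
    refine (hmem _).2 ?_
    intro a ha2
    rw [Finsupp.support_filter, Finset.mem_filter] at ha2
    exact not_not.1 ha2.2
  have hprod' : ∀ γ : MonoidAlgebra K (SnMonoid n H), α' * γ * β' ∈ I := by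
    intro γ
    have key : α' * γ * β' =
        α * γ * β - (α - α') * γ * β - α' * γ * (β - β') := by noncomm_ring
    rw [key]
    refine Submodule.sub_mem _ (Submodule.sub_mem _ (hprod γ) ?_) ?_
    · exact (hmem _).2 (hmulr _ β (hmulr _ γ ((hmem _).1 (hdiffmem α))))
    · exact (hmem _).2 (hmull _ (α' * γ) ((hmem _).1 (hdiffmem β)))
  -- supports are nonempty
  have hα'ne : α'.coeff.support.Nonempty := by
    obtain ⟨u0, hu0s, hu0Q⟩ : ∃ a ∈ α.coeff.support, a ∉ Q := by
      by_contra hno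
      push_neg at hno
      exact hαI ((hmem α).2 hno)
    refine ⟨u0, Finsupp.mem_support_iff.2 ?_⟩
    rw [hα', Finsupp.filter_apply_pos p α.coeff hu0Q]
    exact Finsupp.mem_support_iff.1 hu0s
  have hβ'ne : β'.coeff.support.Nonempty := by
    obtain ⟨v0, hv0s, hv0Q⟩ : ∃ a ∈ β.coeff.support, a ∉ Q := by
      by_contra hno
      push_neg at hno
      exact hβI ((hmem β).2 hno)
    refine ⟨v0, Finsupp.mem_support_iff.2 ?_⟩
    rw [hβ', Finsupp.filter_apply_pos p β.coeff hv0Q]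
    exact Finsupp.mem_support_iff.1 hv0s
  obtain ⟨u, huS, humax⟩ := Finset.exists_max_image α'.coeff.support (Stmt15Aux.wlen n H) hα'ne
  obtain ⟨v, hvS, hvmax⟩ := Finset.exists_max_image β'.coeff.support (Stmt15Aux.wlen n H) hβ'ne
  obtain ⟨s, hs⟩ := hprime u v (hα'Q u huS) (hβ'Q v hvS)
  have hinj : ∀ u' ∈ α'.coeff.support, ∀ v' ∈ β'.coeff.support,
      u' * s * v' = u * s * v → u' = u ∧ v' = v := by
    intro u' hu' v' hv' hsv
    exact Stmt15Aux.key_inj Q hz hs (humax u' hu') (hvmax v' hv') hsv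
  have happ := Stmt15Aux.triple_apply K α' β' s huS hvS hinj
  have hne0 : (α' * MonoidAlgebra.single s (1:K) * β').coeff (u * s * v) ≠ 0 := by
    rw [happ]
    exact mul_ne_zero (Finsupp.mem_support_iff.1 huS) (Finsupp.mem_support_iff.1 hvS)
  have hmemQ := (hmem _).1 (hprod' (MonoidAlgebra.single s (1:K)))
  exact hs (hmemQ _ (Finsupp.mem_support_iff.2 hne0))
end
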